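/- Let S be a subset of ω₁. If S is closed in ω₁ and unbounded, then K(S) has a subset with no upper bound and add(K(S)) = ω₁ (every countable subset of K(S) is bounded in K(S), and some subset of size ω₁ is unbounded). If S is not closed in ω₁, then add(K(S)) = ω (some countable subset of K(S) is unbounded in K(S)). -/

import Mathlib

/-!
A compact subset of `ω₁` is closed and bounded, and every countable subset of `ω₁` is bounded.
If `S` is closed and unbounded, a countable family in `K(S)` is therefore bounded by `S ∩ [0, β]`
for a common bound `β`, while the `ℵ₁` singletons of points of `S` have no common bound. If `S`
is not closed, pick `p ∈ closure S \ S`; then `p` is already a limit of the countable set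
`S ∩ [0, p)`, so a compact, hence closed, `K ⊆ S` cannot contain all of those points. Finite
families in `K(S)` are bounded by their union, so `add(K(S)) = ℵ₀` in that case.
-/

open Cardinal Set

universe u v

/-- `C` is cofinal for `P'` in `P`: every element of `P'` lies below some element of `C`. -/
def IsCofinalFor' {P : Type u} [Preorder P] (P' C : Set P) : Prop :=
  ∀ p ∈ P', ∃ c ∈ C, p ≤ c

/-- `φ : P → Q` is a relative Tukey quotient from `(P', P)` to `(Q', Q)`:
it maps every subset of `P` cofinal for `P'` to a subset of `Q` cofinal for `Q'`. -/
def IsRelTukeyQuotient {P : Type u} {Q : Type v} [Preorder P] [Preorder Q]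
    (P' : Set P) (Q' : Set Q) (φ : P → Q) : Prop :=
  ∀ C : Set P, IsCofinalFor' P' C → IsCofinalFor' Q' (φ '' C)

/-- `(P', P) ≥_T (Q', Q)`: there exists a relative Tukey quotient. -/
def RelTukeyGE {P : Type u} {Q : Type v} [Preorder P] [Preorder Q]
    (P' : Set P) (Q' : Set Q) : Prop :=
  ∃ φ : P → Q, IsRelTukeyQuotient P' Q' φ

/-- `P ≥_T Q`: there is a Tukey quotient from `P` to `Q`. -/
def TukeyGE (P : Type u) (Q : Type v) [Preorder P] [Preorder Q] : Prop :=
  RelTukeyGE (Set.univ : Set P) (Set.univ : Set Q)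

/-- `A` is unbounded in `P`: it has no upper bound in `P`. -/
def UnboundedIn {P : Type u} [Preorder P] (A : Set P) : Prop :=
  ¬ ∃ b : P, ∀ a ∈ A, a ≤ b

noncomputable section

/-- `ω₁`: the set of countable ordinals, as the canonical well-order of order type `ω₁`. -/
def O1 : Type := (Cardinal.aleph 1).ord.ToType

noncomputable instance : LinearOrder O1 :=
  inferInstanceAs (LinearOrder (Cardinal.aleph 1).ord.ToType)

/-- `ω₁` carries its order topology. -/
instance : TopologicalSpace O1 := Preorder.topology O1

instance : OrderTopology O1 := ⟨rfl⟩

/-- `K(S)` for `S ⊆ ω₁`: the compact subsets of `S` (equivalently, compact subsets of `ω₁`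
contained in `S`), ordered by inclusion. -/
def KS (S : Set O1) : Type := {K : Set O1 // K ⊆ S ∧ IsCompact K}

instance (S : Set O1) : PartialOrder (KS S) := Subtype.partialOrder _

/-- `A ⊆ ω₁` is bounded in `ω₁`. -/
def BddO1 (A : Set O1) : Prop := ∃ β : O1, ∀ x ∈ A, x ≤ β

/-- `add(P)`: the least cardinality of a subset of `P` unbounded in `P`. -/
noncomputable def addOf (P : Type u) [Preorder P] : Cardinal.{u} :=
  sInf {c : Cardinal.{u} | ∃ A : Set P, UnboundedIn A ∧ #↥A = c}

open Order

theorem addOf_eq_of_exists_le {P : Type u} [Preorder P] {c : Cardinal.{u}}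
    (hunb : ∃ A : Set P, UnboundedIn A ∧ #A ≤ c)
    (hbdd : ∀ A : Set P, #A < c → ∃ b, ∀ a ∈ A, a ≤ b) : addOf P = c := by
  have hle : ∀ A : Set P, UnboundedIn A → c ≤ #A := fun A hA =>
    not_lt.1 fun hlt => hA (hbdd A hlt)
  obtain ⟨A, hA, hAc⟩ := hunb
  have hmem : c ∈ {c | ∃ A : Set P, UnboundedIn A ∧ #A = c} :=
    ⟨A, hA, le_antisymm hAc (hle A hA)⟩
  refine le_antisymm (csInf_le' hmem) (le_csInf ⟨c, hmem⟩ ?_)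
  rintro _ ⟨B, hB, rfl⟩
  exact hle B hB

section SuccOrder

variable {α : Type*} [LinearOrder α] [TopologicalSpace α] [OrderTopology α] [SuccOrder α]

theorem isOpen_Iic_of_succOrder (a : α) : IsOpen (Iic a) := by
  by_cases ha : IsMax a
  · rw [ha.isTop.Iic_eq]
    exact isOpen_univ
  · rw [← Iio_succ_of_not_isMax ha]
    exact isOpen_Iio

theorem mem_closure_inter_Iio {s : Set α} {a : α} (ha : a ∈ closure s) (has : a ∉ s) :
    a ∈ closure (s ∩ Iio a) := by
  have hsub : s ⊆ (s ∩ Iio a) ∪ Ioi a := fun x hx =>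
    (lt_or_gt_of_ne (ne_of_mem_of_not_mem hx has)).imp (fun h => ⟨hx, h⟩) id
  have hIoi : IsClosed (Ioi a) := compl_Iic (a := a) ▸ (isOpen_Iic_of_succOrder a).isClosed_compl
  have := closure_mono hsub ha
  rw [closure_union, hIoi.closure_eq] at this
  exact this.resolve_right (lt_irrefl a)

end SuccOrder

namespace O1

instance : Nonempty O1 :=
  Ordinal.nonempty_toType_iff.2 (ord_pos.2 (aleph_pos 1)).ne'

instance : WellFoundedLT O1 := inferInstanceAs (WellFoundedLT (aleph 1).ord.ToType)

instance : SuccOrder O1 := inferInstanceAs (SuccOrder (aleph 1).ord.ToType)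

instance : OrderBot O1 := WellFoundedLT.toOrderBot O1

instance : ConditionallyCompleteLinearOrderBot O1 :=
  WellFoundedLT.conditionallyCompleteLinearOrderBot O1

theorem mk_eq : #O1 = ℵ₁ := by
  simp [O1]

theorem cof_eq : Order.cof O1 = ℵ₁ :=
  (Ordinal.cof_toType _).trans isRegular_aleph_one.cof_ord

theorem bddAbove_of_countable {A : Set O1} (hA : A.Countable) : BddAbove A := by
  refine BddAbove.of_not_isCofinal fun hcof => ?_
  have := (cof_eq ▸ Order.cof_le hcof).trans (le_aleph0_iff_set_countable.2 hA)
  exact aleph0_lt_aleph_one.not_ge this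

theorem countable_Iio (x : O1) : (Iio x).Countable := by
  rw [← le_aleph0_iff_set_countable, ← lt_aleph_one_iff, ← mk_eq]
  exact Cardinal.mk_Iio_lt x (by rw [mk_eq]; exact (Ordinal.type_toType _).symm)

theorem countable_of_bddAbove {A : Set O1} (hA : BddAbove A) : A.Countable := by
  obtain ⟨β, hβ⟩ := hA
  exact ((countable_Iio β).insert β).mono (Iio_insert (a := β) ▸ hβ)

theorem mk_eq_of_not_bddAbove {S : Set O1} (hS : ¬ BddAbove S) : #S = ℵ₁ :=
  le_antisymm (mk_eq ▸ mk_set_le S)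
    (not_lt.1 fun h =>
      hS (bddAbove_of_countable (le_aleph0_iff_set_countable.1 (lt_aleph_one_iff.1 h))))

theorem isCompact_of_isClosed_bddAbove {C : Set O1} (hC : IsClosed C) (hb : BddAbove C) :
    IsCompact C := by
  obtain ⟨β, hβ⟩ := hb
  exact isCompact_Icc.of_isClosed_subset hC fun x hx => ⟨bot_le, hβ hx⟩

end O1

namespace KS

variable {S : Set O1}

def singleton (x : S) : KS S := ⟨{x.1}, singleton_subset_iff.2 x.2, isCompact_singleton⟩

theorem singleton_injective : Function.Injective (singleton : S → KS S) := fun _ _ h =>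
  Subtype.ext (singleton_eq_singleton_iff.1 (congrArg Subtype.val h))

theorem singleton_le_iff {x : S} {K : KS S} : singleton x ≤ K ↔ x.1 ∈ K.1 :=
  singleton_subset_iff

theorem exists_upperBound_of_finite {A : Set (KS S)} (hA : A.Finite) :
    ∃ b : KS S, ∀ a ∈ A, a ≤ b :=
  ⟨⟨⋃ a ∈ A, a.1, iUnion₂_subset fun a _ => a.2.1, hA.isCompact_biUnion fun a _ => a.2.2⟩,
    fun _ ha => subset_biUnion_of_mem ha⟩

theorem exists_upperBound_of_countable (hS : IsClosed S) {A : Set (KS S)} (hA : A.Countable) :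
    ∃ b : KS S, ∀ a ∈ A, a ≤ b := by
  have hU : (⋃ a ∈ A, a.1).Countable :=
    hA.biUnion fun a _ => O1.countable_of_bddAbove a.2.2.bddAbove
  obtain ⟨β, hβ⟩ := O1.bddAbove_of_countable hU
  refine ⟨⟨S ∩ Iic β, inter_subset_left,
    O1.isCompact_of_isClosed_bddAbove (hS.inter isClosed_Iic) ⟨β, fun _ hx => hx.2⟩⟩, ?_⟩
  exact fun a ha x hx => ⟨a.2.1 hx, hβ (mem_biUnion ha hx)⟩

theorem exists_unboundedIn_of_not_bddAbove (hS : ¬ BddAbove S) :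
    ∃ A : Set (KS S), #A = ℵ₁ ∧ UnboundedIn A := by
  refine ⟨range singleton, ?_, ?_⟩
  · rw [mk_range_eq _ singleton_injective, O1.mk_eq_of_not_bddAbove hS]
  · rintro ⟨K, hK⟩
    obtain ⟨β, hβ⟩ := K.2.2.bddAbove
    exact hS ⟨β, fun x hx => hβ (singleton_le_iff.1 (hK _ ⟨⟨x, hx⟩, rfl⟩))⟩

theorem exists_countable_unboundedIn_of_not_isClosed (hS : ¬ IsClosed S) :
    ∃ A : Set (KS S), A.Countable ∧ UnboundedIn A := by
  obtain ⟨p, hpS', hpS⟩ := not_subset.1 (mt isClosed_of_closure_subset hS)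
  refine ⟨singleton '' {x | x.1 < p},
    ((O1.countable_Iio p).preimage Subtype.val_injective).image _, ?_⟩
  rintro ⟨K, hK⟩
  have hT : S ∩ Iio p ⊆ K.1 := fun x hx => singleton_le_iff.1 (hK _ ⟨⟨x, hx.1⟩, hx.2, rfl⟩)
  exact hpS (K.2.1 (closure_minimal hT K.2.2.isClosed (mem_closure_inter_Iio hpS' hpS)))

end KS

theorem statement11 (S : Set O1) :
    (IsClosed S → ¬ BddO1 S →
      (∃ A : Set (KS S), UnboundedIn A) ∧ addOf (KS S) = Cardinal.aleph 1 ∧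
        (∀ A : Set (KS S), #↥A ≤ ℵ₀ → ∃ b : KS S, ∀ a ∈ A, a ≤ b) ∧
        (∃ A : Set (KS S), #↥A = Cardinal.aleph 1 ∧ UnboundedIn A)) ∧
      (¬ IsClosed S →
        addOf (KS S) = ℵ₀ ∧ ∃ A : Set (KS S), #↥A ≤ ℵ₀ ∧ UnboundedIn A) := by
  refine ⟨fun hcl hunb => ?_, fun hncl => ?_⟩
  · have hbdd : ∀ A : Set (KS S), #A ≤ ℵ₀ → ∃ b, ∀ a ∈ A, a ≤ b := fun A hA =>
      KS.exists_upperBound_of_countable hcl (le_aleph0_iff_set_countable.1 hA)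
    obtain ⟨A, hA, hAunb⟩ :=
      KS.exists_unboundedIn_of_not_bddAbove fun ⟨β, hβ⟩ => hunb ⟨β, fun _ hx => hβ hx⟩
    refine ⟨⟨A, hAunb⟩, ?_, hbdd, A, hA, hAunb⟩
    exact addOf_eq_of_exists_le ⟨A, hAunb, hA.le⟩ fun B hB => hbdd B (lt_aleph_one_iff.1 hB)
  · obtain ⟨A, hA, hAunb⟩ := KS.exists_countable_unboundedIn_of_not_isClosed hncl
    have hAc := le_aleph0_iff_set_countable.2 hA
    refine ⟨?_, A, hAc, hAunb⟩
    exact addOf_eq_of_exists_le ⟨A, hAunb, hAc⟩ fun B hB =>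
      KS.exists_upperBound_of_finite (lt_aleph0_iff_set_finite.1 hB)
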